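/- arXiv:1508.01862 — 2 statements merged into one kernel-verified Lean document; each statement's English description precedes it below -/
import Mathlib

section
/- Let (V,q) be a nondegenerate quadratic space of even dimension d = N+2 over a field of characteristic zero, let {e₁,…,e_d} be an orthogonal basis of V, and let v ∈ V be a nonisotropic vector. Then the map β: V → End(C⁺(V)) sending w to the composition L_{w e₁⋯e_d} ∘ R_v, where L denotes left multiplication and R right multiplication in the full Clifford algebra, restricted to C⁺(V), is an injective linear map, equivariant for the action of Spin(V) acting on V through SO(V,q) and on End(C⁺(V)) by conjugation via left multiplication. -/
open CliffordAlgebra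

section Aux

lemma aux_isUnit_listProd {M : Type*} [Monoid M] :
    ∀ l : List M, (∀ x ∈ l, IsUnit x) → IsUnit l.prod
  | [], _ => by simp
  | a :: l, h => by
    rw [List.prod_cons]
    exact (h a (List.mem_cons_self)).mul
      (aux_isUnit_listProd l fun x hx => h x (List.mem_cons_of_mem _ hx))

variable {k V : Type*} [CommRing k] [AddCommGroup V] [Module k V] (Q : QuadraticForm k V)

lemma aux_move (u : V) :
    ∀ (l : List V), (∀ w ∈ l, QuadraticMap.polar Q u w = 0) →
      ι Q u * (l.map (ι Q)).prod = ((-1 : k) ^ l.length) • ((l.map (ι Q)).prod * ι Q u)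
  | [], _ => by simp
  | a :: l, h => by
    have ha : QuadraticMap.polar Q u a = 0 := h a (List.mem_cons_self)
    have hrec := aux_move u l fun w hw => h w (List.mem_cons_of_mem _ hw)
    rw [List.map_cons, List.prod_cons, ← mul_assoc, ι_mul_ι_comm, ha, map_zero, zero_sub,
      neg_mul, mul_assoc, hrec, List.length_cons, pow_succ, mul_smul, mul_smul_comm]
    simp only [neg_one_smul, smul_neg, mul_assoc]

lemma aux_prod_mem :
    ∀ l : List V, (l.map (ι Q)).prod ∈ evenOdd Q (l.length : ZMod 2)
  | [] => by simpa using SetLike.one_mem_graded _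
  | a :: l => by
    have := SetLike.mul_mem_graded (ι_mem_evenOdd_one Q a) (aux_prod_mem l)
    rw [List.map_cons, List.prod_cons]
    have hc : (((a :: l).length : ℕ) : ZMod 2) = 1 + ((l.length : ℕ) : ZMod 2) := by
      rw [List.length_cons]; push_cast; ring
    rw [hc]
    exact this

end Aux

/-- Let `(V,Q)` be a nondegenerate quadratic space of even dimension `d = N+2`
over a field of characteristic zero, `e₁,…,e_d` an orthogonal basis, `v` a nonisotropic vector.
The map `β : w ↦ L_{w·e₁⋯e_d} ∘ R_v` is an injective linear map into endomorphisms of the Clifford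
algebra; it preserves the even part `C⁺(V)`, and is equivariant for the conjugation action of the
spin group (acting on `V` through `SO(V,q)` and on endomorphisms by conjugation via left
multiplication). -/
theorem stmt2
    (k : Type*) [Field k] [CharZero k]
    (V : Type*) [AddCommGroup V] [Module k V] [FiniteDimensional k V]
    (Q : QuadraticForm k V)
    (hQnd : ∀ x : V, (∀ y : V, QuadraticMap.polar (fun z => Q z) x y = 0) → x = 0)
    (N d : ℕ) (hd : d = N + 2) (hdeven : Even d)
    (hdim : Module.finrank k V = d)
    (e : Module.Basis (Fin d) k V)
    (horth : ∀ i j : Fin d, i ≠ j → QuadraticMap.polar (fun z => Q z) (e i) (e j) = 0)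
    (v : V) (hv : Q v ≠ 0)
    (B : V → CliffordAlgebra Q → CliffordAlgebra Q)
    (hB : ∀ w x, B w x =
      (ι Q w * (List.ofFn fun i : Fin d => ι Q (e i)).prod) * x * ι Q v) :
    Function.Injective B ∧
    (∀ (a : k) (w w' : V) (x : CliffordAlgebra Q),
        B (a • w + w') x = a • B w x + B w' x) ∧
    (∀ (w : V) (x : CliffordAlgebra Q), x ∈ even Q → B w x ∈ even Q) ∧
    (∀ g : (CliffordAlgebra Q)ˣ, (g : CliffordAlgebra Q) ∈ spinGroup Q →
      ∀ w w' : V, (g : CliffordAlgebra Q) * ι Q w * ↑g⁻¹ = ι Q w' →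
        ∀ x : CliffordAlgebra Q, B w' ((g : CliffordAlgebra Q) * x)
          = (g : CliffordAlgebra Q) * B w x) := by
  classical
  set l : List V := List.ofFn e with hl
  have hlen : l.length = d := List.length_ofFn
  set E : CliffordAlgebra Q := (List.ofFn fun i : Fin d => ι Q (e i)).prod with hEdef
  have hE : E = (l.map (ι Q)).prod := by
    rw [hEdef, hl, List.map_ofFn]; rfl
  -- each basis vector is nonisotropic
  have hQe : ∀ i : Fin d, Q (e i) ≠ 0 := by
    intro i hQei
    have hpolar : ∀ y : V, QuadraticMap.polar (fun z => Q z) (e i) y = 0 := by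
      intro y
      show QuadraticMap.polar (⇑Q) (e i) y = 0
      rw [← QuadraticMap.polarBilin_apply_apply, ← e.sum_repr y, map_sum]
      refine Finset.sum_eq_zero fun j _ => ?_
      rw [map_smul, QuadraticMap.polarBilin_apply_apply]
      rcases eq_or_ne i j with rfl | hij
      · rw [QuadraticMap.polar_self, hQei, smul_zero, smul_zero]
      · rw [show QuadraticMap.polar (⇑Q) (e i) (e j) = 0 from horth i j hij, smul_zero]
    exact absurd (hQnd _ hpolar) (e.ne_zero i)
  -- ι is injective
  have hιinj : Function.Injective (ι Q) := by
    letI : Invertible (2 : k) := invertibleOfNonzero two_ne_zero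
    intro a b hab
    have := congrArg (CliffordAlgebra.changeForm
      (Q' := (0 : QuadraticForm k V)) CliffordAlgebra.changeForm.associated_neg_proof) hab
    rw [CliffordAlgebra.changeForm_ι, CliffordAlgebra.changeForm_ι] at this
    exact ExteriorAlgebra.ι_inj k a b |>.mp this
  -- E is a unit
  have hEunit : IsUnit E := by
    rw [hE]
    refine aux_isUnit_listProd _ ?_
    intro x hx
    rw [List.mem_map] at hx
    obtain ⟨w, hwl, rfl⟩ := hx
    rw [hl, List.mem_ofFn] at hwl
    obtain ⟨i, rfl⟩ := hwl
    refine ⟨⟨ι Q (e i), (Q (e i))⁻¹ • ι Q (e i), ?_, ?_⟩, rfl⟩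
    · rw [mul_smul_comm, ι_sq_scalar, Algebra.algebraMap_eq_smul_one, smul_smul,
        inv_mul_cancel₀ (hQe i), one_smul]
    · rw [smul_mul_assoc, ι_sq_scalar, Algebra.algebraMap_eq_smul_one, smul_smul,
        inv_mul_cancel₀ (hQe i), one_smul]
  -- basis vectors anticommute with E
  have hanti_basis : ∀ j : Fin d, ι Q (e j) * E = -(E * ι Q (e j)) := by
    intro j
    have hjlt : (j : ℕ) < l.length := by rw [hlen]; exact j.2
    have hsplit : l = l.take j ++ e j :: l.drop (j + 1) := by
      conv_lhs => rw [← List.take_append_drop (j : ℕ) l]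
      congr 1
      rw [List.drop_eq_getElem_cons hjlt]
      congr 1
      simp [hl, List.getElem_ofFn]
    set A := l.take (j : ℕ) with hA
    set Bl := l.drop ((j : ℕ) + 1) with hBl
    have hAlen : A.length = (j : ℕ) := by
      rw [hA, List.length_take, hlen]; exact min_eq_left (le_of_lt j.2)
    have hBlen : Bl.length = d - 1 - (j : ℕ) := by
      rw [hBl, List.length_drop, hlen]; omega
    have hAorth : ∀ w ∈ A, QuadraticMap.polar Q (e j) w = 0 := by
      intro w hw
      rw [hA, List.mem_iff_getElem] at hw
      obtain ⟨i, hi, hiw⟩ := hw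
      have hi' : i < (j : ℕ) := by
        have := hi; rw [List.length_take, hlen] at this; omega
      have hil : i < d := by omega
      rw [List.getElem_take] at hiw
      have hli : l[i] = e ⟨i, hil⟩ := by simp [hl, List.getElem_ofFn]
      rw [hli] at hiw
      rw [← hiw]
      exact horth j ⟨i, hil⟩ (by simp [Fin.ext_iff]; omega)
    have hBorth : ∀ w ∈ Bl, QuadraticMap.polar Q (e j) w = 0 := by
      intro w hw
      rw [hBl, List.mem_iff_getElem] at hw
      obtain ⟨i, hi, hiw⟩ := hw
      have hi' : (j : ℕ) + 1 + i < d := by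
        have := hi; rw [List.length_drop, hlen] at this; omega
      rw [List.getElem_drop] at hiw
      have hli : l[(j : ℕ) + 1 + i] = e ⟨(j : ℕ) + 1 + i, hi'⟩ := by
        simp [hl, List.getElem_ofFn]
      rw [hli] at hiw
      rw [← hiw]
      exact horth j ⟨(j : ℕ) + 1 + i, hi'⟩ (by simp [Fin.ext_iff]; omega)
    have hmoveA := aux_move Q (e j) A hAorth
    have hmoveB := aux_move Q (e j) Bl hBorth
    set PA := (A.map (ι Q)).prod with hPA
    set PB := (Bl.map (ι Q)).prod with hPB
    have hEsplit : E = PA * (ι Q (e j) * PB) := by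
      rw [hE]
      conv_lhs => rw [hsplit]
      rw [List.map_append, List.prod_append, List.map_cons, List.prod_cons]
    have hsq : ι Q (e j) * ι Q (e j) = algebraMap k _ (Q (e j)) := ι_sq_scalar Q (e j)
    have hmm : PA * (ι Q (e j) * (ι Q (e j) * PB)) = Q (e j) • (PA * PB) := by
      rw [← mul_assoc (ι Q (e j)) (ι Q (e j)) PB, hsq, ← Algebra.smul_def, mul_smul_comm]
    have h1 : ι Q (e j) * E = ((-1 : k) ^ (j : ℕ) * Q (e j)) • (PA * PB) := by
      calc ι Q (e j) * E = (ι Q (e j) * PA) * (ι Q (e j) * PB) := by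
            rw [hEsplit]; simp only [mul_assoc]
        _ = (((-1 : k) ^ (j : ℕ)) • (PA * ι Q (e j))) * (ι Q (e j) * PB) := by
            rw [hmoveA, hAlen]
        _ = ((-1 : k) ^ (j : ℕ)) • (PA * (ι Q (e j) * (ι Q (e j) * PB))) := by
            simp only [smul_mul_assoc, mul_assoc]
        _ = ((-1 : k) ^ (j : ℕ)) • (Q (e j) • (PA * PB)) := by rw [hmm]
        _ = ((-1 : k) ^ (j : ℕ) * Q (e j)) • (PA * PB) := by rw [smul_smul]
    have hBrev : PB * ι Q (e j) = ((-1 : k) ^ Bl.length) • (ι Q (e j) * PB) := by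
      have hsq2 : ((-1 : k) ^ Bl.length) • (((-1 : k) ^ Bl.length) •
          (PB * ι Q (e j))) = PB * ι Q (e j) := by
        rw [smul_smul, ← pow_add, ← two_mul, pow_mul]
        norm_num
      rw [← hsq2, ← hmoveB]
    have h2 : E * ι Q (e j) = ((-1 : k) ^ (d - 1 - (j : ℕ)) * Q (e j)) • (PA * PB) := by
      calc E * ι Q (e j) = PA * (ι Q (e j) * (PB * ι Q (e j))) := by
            rw [hEsplit]; simp only [mul_assoc]
        _ = PA * (ι Q (e j) * (((-1 : k) ^ Bl.length) • (ι Q (e j) * PB))) := by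
            rw [hBrev]
        _ = ((-1 : k) ^ Bl.length) • (PA * (ι Q (e j) * (ι Q (e j) * PB))) := by
            simp only [mul_smul_comm]
        _ = ((-1 : k) ^ (d - 1 - (j : ℕ)) * Q (e j)) • (PA * PB) := by
            rw [hmm, smul_smul, hBlen]
    have hsign : ((-1 : k) ^ (j : ℕ) : k) = -((-1 : k) ^ (d - 1 - (j : ℕ))) := by
      have hjd : (j : ℕ) < d := j.2
      have hadd : (-1 : k) ^ (j : ℕ) * (-1 : k) ^ (d - 1 - (j : ℕ)) = (-1 : k) ^ (d - 1) := by
        rw [← pow_add]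
        congr 1
        omega
      have hodd : Odd (d - 1) := by
        rcases hdeven with ⟨m, hm⟩
        exact ⟨m - 1, by omega⟩
      have hneg : (-1 : k) ^ (d - 1) = -1 := hodd.neg_one_pow
      have hsq3 : (-1 : k) ^ (d - 1 - (j : ℕ)) * (-1 : k) ^ (d - 1 - (j : ℕ)) = 1 := by
        rw [← pow_add, ← two_mul, pow_mul]; norm_num
      calc (-1 : k) ^ (j : ℕ)
          = (-1 : k) ^ (j : ℕ) *
              ((-1 : k) ^ (d - 1 - (j : ℕ)) * (-1 : k) ^ (d - 1 - (j : ℕ))) := by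
            rw [hsq3, mul_one]
        _ = ((-1 : k) ^ (d - 1)) * (-1 : k) ^ (d - 1 - (j : ℕ)) := by
            rw [← mul_assoc, hadd]
        _ = -((-1 : k) ^ (d - 1 - (j : ℕ))) := by rw [hneg, neg_one_mul]
    rw [h1, h2, hsign, ← neg_smul, neg_mul]
  -- all vectors anticommute with E
  have hanti : ∀ u : V, ι Q u * E = -(E * ι Q u) := by
    intro u
    have hιu : ι Q u = ∑ j, e.repr u j • ι Q (e j) := by
      conv_lhs => rw [← e.sum_repr u]
      rw [map_sum]
      simp only [map_smul]
    rw [hιu, Finset.sum_mul, Finset.mul_sum, ← Finset.sum_neg_distrib]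
    refine Finset.sum_congr rfl fun j _ => ?_
    rw [smul_mul_assoc, hanti_basis j, mul_smul_comm, smul_neg]
  -- E commutes with even elements
  have hcomm_even : ∀ x, x ∈ evenOdd Q 0 → E * x = x * E := by
    intro x hx
    refine even_induction (Q := Q) (motive := fun x _ => E * x = x * E) ?_ ?_ ?_ x hx
    · intro r
      exact (Algebra.commutes r E).symm
    · intro x y hx hy ihx ihy
      rw [mul_add, add_mul, ihx, ihy]
    · intro m₁ m₂ x hx ih
      have h1 : E * ι Q m₁ = -(ι Q m₁ * E) := by rw [hanti m₁, neg_neg]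
      have h2 : E * ι Q m₂ = -(ι Q m₂ * E) := by rw [hanti m₂, neg_neg]
      calc E * (ι Q m₁ * ι Q m₂ * x)
          = (E * ι Q m₁) * (ι Q m₂ * x) := by simp only [mul_assoc]
        _ = (-(ι Q m₁ * E)) * (ι Q m₂ * x) := by rw [h1]
        _ = -(ι Q m₁ * ((E * ι Q m₂) * x)) := by simp only [neg_mul, mul_assoc]
        _ = -(ι Q m₁ * ((-(ι Q m₂ * E)) * x)) := by rw [h2]
        _ = ι Q m₁ * (ι Q m₂ * (E * x)) := by
            simp only [neg_mul, mul_neg, neg_neg, mul_assoc]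
        _ = ι Q m₁ * (ι Q m₂ * (x * E)) := by rw [ih]
        _ = ι Q m₁ * ι Q m₂ * x * E := by simp only [mul_assoc]
  refine ⟨?_, ?_, ?_, ?_⟩
  · -- injectivity
    intro w w' h
    have h1 : B w 1 = B w' 1 := by rw [h]
    rw [hB, hB] at h1
    simp only [mul_one] at h1
    have h2 : ι Q w * E * (ι Q v * ι Q v) = ι Q w' * E * (ι Q v * ι Q v) := by
      rw [← mul_assoc, ← mul_assoc, h1]
    rw [ι_sq_scalar, ← Algebra.commutes, ← Algebra.smul_def, ← Algebra.commutes,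
      ← Algebra.smul_def] at h2
    have h3 : ι Q w * E = ι Q w' * E := smul_right_injective _ hv h2
    exact hιinj (hEunit.mul_right_cancel h3)
  · -- linearity
    intro a w w' x
    rw [hB, hB, hB, map_add, map_smul, add_mul, add_mul, add_mul, smul_mul_assoc,
      smul_mul_assoc, smul_mul_assoc]
  · -- preserves even part
    intro w x hx
    have hxm : x ∈ evenOdd Q 0 := by
      rw [← even_toSubmodule]
      exact (Subalgebra.mem_toSubmodule _).mpr hx
    have hd0 : ((d : ℕ) : ZMod 2) = 0 := by
      obtain ⟨m, hm⟩ := hdeven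
      rw [hm]
      push_cast
      rw [← two_mul]
      simp [show ((2 : ZMod 2)) = 0 from rfl]
    have hEmem : E ∈ evenOdd Q 0 := by
      have := aux_prod_mem Q l
      rw [← hE, hlen, hd0] at this
      exact this
    have hmem := SetLike.mul_mem_graded (SetLike.mul_mem_graded
      (SetLike.mul_mem_graded (ι_mem_evenOdd_one Q w) hEmem) hxm) (ι_mem_evenOdd_one Q v)
    have h20 : ((1 : ZMod 2) + 0 + 0 + 1) = 0 := by decide
    rw [h20] at hmem
    rw [hB]
    exact (Subalgebra.mem_toSubmodule _).mp (by rw [even_toSubmodule]; exact hmem)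
  · -- equivariance
    intro g hg w w' hconj x
    have hgeven : (↑g : CliffordAlgebra Q) ∈ even Q := hg.2
    have hgmem : (↑g : CliffordAlgebra Q) ∈ evenOdd Q 0 := by
      rw [← even_toSubmodule]
      exact (Subalgebra.mem_toSubmodule _).mpr hgeven
    have hcomm : E * (↑g : CliffordAlgebra Q) = ↑g * E := hcomm_even _ hgmem
    have hmid2 : ∀ y : CliffordAlgebra Q,
        (↑g⁻¹ : CliffordAlgebra Q) * (E * ((↑g : CliffordAlgebra Q) * y)) = E * y := by
      intro y
      calc (↑g⁻¹ : CliffordAlgebra Q) * (E * ((↑g : CliffordAlgebra Q) * y))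
          = ((↑g⁻¹ : CliffordAlgebra Q) * (E * ↑g)) * y := by simp only [mul_assoc]
        _ = E * y := by rw [hcomm, ← mul_assoc, Units.inv_mul, one_mul]
    rw [hB, hB, ← hconj]
    simp only [mul_assoc]
    rw [hmid2 (x * ι Q v)]
end

section
/- Let β ≠ 0 be a complex number and r₁, r₂, r₃ the three roots of X³ − 2β. Then the four points with coordinates (Z₀′ : Z₁ : Z₂) equal to (1:0:0), (r₁:1:−1), (r₂:1:−1), (r₃:1:−1) are common zeros (at t = 0) of the five polynomials χ₁ = 2β(Z₁⁴ − Z₂⁴), χ₂ = Z₀′Z₁Z₂(Z₁+Z₂), χ₃ = Z₀′³Z₂ − 2βZ₁Z₂³, χ₄ = Z₀′³Z₁ + 2βZ₁³Z₂, χ₅ = 2βZ₀′²(Z₁² − Z₂²). Moreover these are exactly the common zeros in ℙ² of χ₁,…,χ₅ — in particular the common zero locus consists of precisely four points. -/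
/-- Let `β ≠ 0` be a complex number.  The common zeros in `ℙ²` (nonzero vectors
`(Z₀′, Z₁, Z₂)` up to scale) of the five polynomials
`χ₁ = 2β(Z₁⁴ − Z₂⁴)`, `χ₂ = Z₀′Z₁Z₂(Z₁+Z₂)`, `χ₃ = Z₀′³Z₂ − 2βZ₁Z₂³`,
`χ₄ = Z₀′³Z₁ + 2βZ₁³Z₂`, `χ₅ = 2βZ₀′²(Z₁² − Z₂²)`
are exactly the four points `(1:0:0)` and `(r:1:−1)` for the three roots `r` of `X³ − 2β`. -/
theorem stmt9
    (β : ℂ) (hβ : β ≠ 0) (z : Fin 3 → ℂ) (hz : z ≠ 0) :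
    (2 * β * ((z 1) ^ 4 - (z 2) ^ 4) = 0 ∧
     z 0 * z 1 * z 2 * (z 1 + z 2) = 0 ∧
     (z 0) ^ 3 * z 2 - 2 * β * z 1 * (z 2) ^ 3 = 0 ∧
     (z 0) ^ 3 * z 1 + 2 * β * (z 1) ^ 3 * z 2 = 0 ∧
     2 * β * (z 0) ^ 2 * ((z 1) ^ 2 - (z 2) ^ 2) = 0) ↔
    ((∃ c : ℂ, c ≠ 0 ∧ z = c • ![1, 0, 0]) ∨
     (∃ r c : ℂ, r ^ 3 = 2 * β ∧ c ≠ 0 ∧ z = c • ![r, 1, -1])) := by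
  have h2β : (2 : ℂ) * β ≠ 0 := by
    simpa using hβ
  constructor
  · rintro ⟨h1, h2, h3, h4, h5⟩
    by_cases hb : z 1 = 0
    · -- then z 2 = 0 and z 0 ≠ 0
      have hc : z 2 = 0 := by
        have h14 : (z 2) ^ 4 = 0 := by
          have := h1
          rw [hb] at this
          have : (2 * β) * ((z 2) ^ 4) = 0 := by ring_nf; ring_nf at this; linear_combination -this
          exact (mul_eq_zero.mp this).resolve_left h2β
        exact pow_eq_zero_iff (by norm_num) |>.mp h14
      have ha : z 0 ≠ 0 := by
        intro ha
        apply hz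
        funext i
        fin_cases i <;> simp [ha, hb, hc]
      left
      exact ⟨z 0, ha, by funext i; fin_cases i <;> simp [hb, hc]⟩
    · -- z 1 ≠ 0
      have hc : z 2 ≠ 0 := by
        intro hc
        apply hb
        have h14 : (z 1) ^ 4 = 0 := by
          have := h1
          rw [hc] at this
          have : (2 * β) * ((z 1) ^ 4) = 0 := by linear_combination this
          exact (mul_eq_zero.mp this).resolve_left h2β
        exact pow_eq_zero_iff (by norm_num) |>.mp h14
      have ha : z 0 ≠ 0 := by
        intro ha
        rw [ha] at h3
        have : (2 * β) * (z 1 * (z 2) ^ 3) = 0 := by linear_combination -h3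
        rcases mul_eq_zero.mp this with h | h
        · exact h2β h
        · rcases mul_eq_zero.mp h with h | h
          · exact hb h
          · exact hc (pow_eq_zero_iff (by norm_num) |>.mp h)
      have hsum : z 2 = - z 1 := by
        have : z 1 + z 2 = 0 := by
          rcases mul_eq_zero.mp h2 with h | h
          · rcases mul_eq_zero.mp h with h | h
            · rcases mul_eq_zero.mp h with h | h
              · exact absurd h ha
              · exact absurd h hb
            · exact absurd h hc
          · exact h
        linear_combination this
      -- from h4 : z0^3 = 2β z1^3
      have hcube : (z 0) ^ 3 = 2 * β * (z 1) ^ 3 := by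
        have h4' : z 1 * ((z 0) ^ 3 - 2 * β * (z 1) ^ 3) = 0 := by
          rw [hsum] at h4; linear_combination h4
        have := (mul_eq_zero.mp h4').resolve_left hb
        linear_combination this
      right
      refine ⟨z 0 / z 1, z 1, ?_, hb, ?_⟩
      · field_simp
        linear_combination hcube
      · funext i
        fin_cases i <;> simp [hsum] <;> field_simp
  · rintro (⟨c, hcne, rfl⟩ | ⟨r, c, hr, hcne, rfl⟩)
    · have e0 : (c • ![(1:ℂ), 0, 0]) 0 = c := by simp
      have e1 : (c • ![(1:ℂ), 0, 0]) 1 = 0 := by simp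
      have e2 : (c • ![(1:ℂ), 0, 0]) 2 = 0 := by simp
      refine ⟨?_, ?_, ?_, ?_, ?_⟩ <;> simp only [e0, e1, e2] <;> ring
    · have e0 : (c • ![r, 1, -1]) 0 = c * r := by simp
      have e1 : (c • ![r, 1, -1]) 1 = c := by simp
      have e2 : (c • ![r, 1, -1]) 2 = -c := by simp
      refine ⟨?_, ?_, ?_, ?_, ?_⟩ <;> simp only [e0, e1, e2]
      · ring
      · ring
      · linear_combination (-(c ^ 4)) * hr
      · linear_combination (c ^ 4) * hr
      · ring
end
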